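/- arXiv:1801.04210 — 2 statements merged into one kernel-verified Lean document; each statement's English description precedes it below -/
import Mathlib

section
/- (Weighted Mikljukov–Hwang–Collin–Krust inequality.) Let V be a real inner product space, ρ > 0 a real number, and for a vector a ∈ V write φ(a) = a/√(ρ⁻² + |a|²). Then for all a, b ∈ V: ⟨φ(a) − φ(b), a − b⟩ ≥ ½(√(ρ⁻² + |a|²) + √(ρ⁻² + |b|²))·|φ(a) − φ(b)|² ≥ ρ⁻¹·|φ(a) − φ(b)|². -/
/-!
Write `w(x) = √(ρ⁻² + ‖x‖²)`, so that `x = w(x) • φ(x)`. For any vectors `u, v` and scalars `s, t`,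
`⟪u - v, s • u - t • v⟫ = ½(s + t)‖u - v‖² + ½(s - t)(‖u‖² - ‖v‖²)`.
With `u = φ(a)`, `v = φ(b)`, `s = w(a)`, `t = w(b)` the last term is nonnegative, because
`w(x)` and `‖φ(x)‖² = 1 - ρ⁻² / w(x)²` are both increasing functions of `‖x‖`.
The second inequality is just `ρ⁻¹ ≤ w(x)`.
-/

open scoped RealInnerProductSpace

section InnerProduct

variable {V : Type*} [NormedAddCommGroup V] [InnerProductSpace ℝ V]

theorem inner_sub_smul_sub_smul (u v : V) (s t : ℝ) :
    ⟪u - v, s • u - t • v⟫ = 1 / 2 * (s + t) * ‖u - v‖ ^ 2 + 1 / 2 * (s - t) * (‖u‖ ^ 2 - ‖v‖ ^ 2) := by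
  rw [norm_sub_sq_real]
  simp only [inner_sub_left, inner_sub_right, real_inner_smul_right, real_inner_self_eq_norm_sq,
    real_inner_comm u v]
  ring

theorem half_add_mul_norm_sub_sq_le_inner {s t : ℝ} (hs : s ≠ 0) (ht : t ≠ 0) (a b : V)
    (h : 0 ≤ (s - t) * (‖s⁻¹ • a‖ ^ 2 - ‖t⁻¹ • b‖ ^ 2)) :
    1 / 2 * (s + t) * ‖s⁻¹ • a - t⁻¹ • b‖ ^ 2 ≤ ⟪s⁻¹ • a - t⁻¹ • b, a - b⟫ := by
  have key := inner_sub_smul_sub_smul (s⁻¹ • a) (t⁻¹ • b) s t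
  rw [smul_inv_smul₀ hs, smul_inv_smul₀ ht] at key
  linarith

theorem norm_inv_sqrt_smul_sq {c : ℝ} (hc : c ≠ 0) (x : V) :
    ‖(√(c ^ 2 + ‖x‖ ^ 2))⁻¹ • x‖ ^ 2 = 1 - c ^ 2 / (c ^ 2 + ‖x‖ ^ 2) := by
  have hpos : 0 < c ^ 2 + ‖x‖ ^ 2 := by positivity
  rw [norm_smul, mul_pow, norm_inv, Real.norm_of_nonneg (Real.sqrt_nonneg _), inv_pow,
    Real.sq_sqrt hpos.le]
  field_simp
  ring

end InnerProduct

theorem sqrt_add_sub_mul_div_add_sub_nonneg {c : ℝ} (hc : c ≠ 0) {p q : ℝ} (hp : 0 ≤ p)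
    (hq : 0 ≤ q) :
    0 ≤ (√(c ^ 2 + p) - √(c ^ 2 + q)) * ((1 - c ^ 2 / (c ^ 2 + p)) - (1 - c ^ 2 / (c ^ 2 + q))) := by
  have hc2 : 0 < c ^ 2 := by positivity
  rcases le_total p q with hpq | hqp
  · refine mul_nonneg_of_nonpos_of_nonpos ?_ ?_
    · exact sub_nonpos.2 (Real.sqrt_le_sqrt (by linarith))
    · exact sub_nonpos.2 (sub_le_sub_left (div_le_div_of_nonneg_left hc2.le (by linarith)
        (by linarith)) 1)
  · refine mul_nonneg ?_ ?_
    · exact sub_nonneg.2 (Real.sqrt_le_sqrt (by linarith))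
    · exact sub_nonneg.2 (sub_le_sub_left (div_le_div_of_nonneg_left hc2.le (by linarith)
        (by linarith)) 1)

/-- Weighted Mikljukov–Hwang–Collin–Krust inequality. -/
theorem stmt_1 {V : Type*} [NormedAddCommGroup V] [InnerProductSpace ℝ V]
    (ρ : ℝ) (hρ : 0 < ρ) (a b : V) :
    let φ : V → V := fun x => (Real.sqrt (ρ⁻¹ ^ 2 + ‖x‖ ^ 2))⁻¹ • x
    (1 / 2) * (Real.sqrt (ρ⁻¹ ^ 2 + ‖a‖ ^ 2) + Real.sqrt (ρ⁻¹ ^ 2 + ‖b‖ ^ 2))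
        * ‖φ a - φ b‖ ^ 2 ≤ ⟪φ a - φ b, a - b⟫ ∧
    ρ⁻¹ * ‖φ a - φ b‖ ^ 2
      ≤ (1 / 2) * (Real.sqrt (ρ⁻¹ ^ 2 + ‖a‖ ^ 2) + Real.sqrt (ρ⁻¹ ^ 2 + ‖b‖ ^ 2))
        * ‖φ a - φ b‖ ^ 2 := by
  intro φ
  have hc : 0 < ρ⁻¹ := inv_pos.2 hρ
  have hw : ∀ x : V, 0 < √(ρ⁻¹ ^ 2 + ‖x‖ ^ 2) := fun x => Real.sqrt_pos.2 (by positivity)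
  have hcw : ∀ x : V, ρ⁻¹ ≤ √(ρ⁻¹ ^ 2 + ‖x‖ ^ 2) := fun x =>
    Real.le_sqrt_of_sq_le (le_add_of_nonneg_right (sq_nonneg _))
  refine ⟨half_add_mul_norm_sub_sq_le_inner (hw a).ne' (hw b).ne' a b ?_, ?_⟩
  · rw [norm_inv_sqrt_smul_sq hc.ne', norm_inv_sqrt_smul_sq hc.ne']
    exact sqrt_add_sub_mul_div_add_sub_nonneg hc.ne' (sq_nonneg _) (sq_nonneg _)
  · exact mul_le_mul_of_nonneg_right (by linarith [hcw a, hcw b]) (sq_nonneg _)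
end

section
/- Let a₀, ρ₊, f_a: (0,∞) → (0,∞) be continuous with ∫₀^∞ (∫_t^∞ ds/(ρ₊(s)² f_a(s)^{n−1})) a₀(t) f_a(t)^{n−1} dt < ∞. Define V(r) = (∫_r^∞ ds/(ρ₊² f_a^{n−1})) (∫₀^r a₀ f_a^{n−1} dt) − ∫₀^r (∫_t^∞ ds/(ρ₊² f_a^{n−1})) a₀(t) f_a(t)^{n−1} dt. Then V is C¹ on (0,∞) with V'(r) = −(1/(ρ₊(r)² f_a(r)^{n−1})) ∫₀^r a₀(t) f_a(t)^{n−1} dt < 0, and V(r) → D as r → ∞ for some finite limit D ≤ 0. -/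
open MeasureTheory Set Filter intervalIntegral

lemma aux_barrier (g h : ℝ → ℝ)
    (hgc : ContinuousOn g (Set.Ioi 0)) (hhc : ContinuousOn h (Set.Ioi 0))
    (hgpos : ∀ s > 0, 0 < g s) (hhpos : ∀ t > 0, 0 < h t)
    (hgint : ∀ t > 0, IntegrableOn g (Set.Ioi t) volume)
    (hhint : ∀ r > 0, IntervalIntegrable h volume 0 r)
    (hbig : IntegrableOn (fun t => (∫ s in Set.Ioi t, g s) * h t) (Set.Ioi 0) volume)
    (V : ℝ → ℝ)
    (hV : ∀ r, V r = (∫ s in Set.Ioi r, g s) * (∫ t in (0:ℝ)..r, h t)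
        - ∫ t in (0:ℝ)..r, (∫ s in Set.Ioi t, g s) * h t) :
    (∀ r > 0, HasDerivAt V (-g r * ∫ t in (0:ℝ)..r, h t) r) ∧
    (∀ r > 0, -g r * (∫ t in (0:ℝ)..r, h t) < 0) ∧
    (∃ D : ℝ, D ≤ 0 ∧ Tendsto V atTop (nhds D)) := by
  set J : ℝ → ℝ := fun r => ∫ s in Set.Ioi r, g s with hJ
  set A : ℝ → ℝ := fun r => ∫ t in (0:ℝ)..r, h t with hA
  set B : ℝ → ℝ := fun r => ∫ t in (0:ℝ)..r, J t * h t with hB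
  have hgca : ∀ r ∈ Set.Ioi (0:ℝ), ContinuousAt g r := fun r hr =>
    hgc.continuousAt (Ioi_mem_nhds hr)
  have hhca : ∀ r ∈ Set.Ioi (0:ℝ), ContinuousAt h r := fun r hr =>
    hhc.continuousAt (Ioi_mem_nhds hr)
  have hJnonneg : ∀ r > 0, 0 ≤ J r := fun r hr =>
    setIntegral_nonneg measurableSet_Ioi fun s hs => (hgpos s (hr.trans hs)).le
  have hJsub : ∀ a b : ℝ, 0 < a → a ≤ b → J a = (∫ x in a..b, g x) + J b := by
    intro a b ha hab
    rw [intervalIntegral.integral_of_le hab, hJ]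
    rw [← MeasureTheory.setIntegral_union (Set.Ioc_disjoint_Ioi le_rfl)
      measurableSet_Ioi ((hgint a ha).mono_set Set.Ioc_subset_Ioi_self)
      (hgint b (ha.trans_le hab)), Set.Ioc_union_Ioi_eq_Ioi hab]
  have hJall : ∀ a b : ℝ, 0 < a → 0 < b → J b = J a - ∫ x in a..b, g x := by
    intro a b ha hb
    rcases le_total a b with hab | hab
    · have := hJsub a b ha hab; linarith
    · have := hJsub b a hb hab
      rw [intervalIntegral.integral_symm]
      linarith
  have hJderiv : ∀ r > 0, HasDerivAt J (-g r) r := by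
    intro r hr
    have h1 : HasDerivAt (fun x => J r - ∫ t in r..x, g t) (-g r) r := by
      have := (intervalIntegral.integral_hasDerivAt_right
        (IntervalIntegrable.refl (f := g) (μ := volume) (a := r))
        (ContinuousAt.stronglyMeasurableAtFilter isOpen_Ioi hgca r hr)
        (hgca r hr)).const_sub (J r)
      simpa using this
    apply h1.congr_of_eventuallyEq
    filter_upwards [Ioi_mem_nhds hr] with x hx
    exact hJall r x hr hx
  have hJcont : ∀ r > 0, ContinuousAt J r := fun r hr => (hJderiv r hr).continuousAt
  have hAderiv : ∀ r > 0, HasDerivAt A (h r) r := fun r hr =>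
    intervalIntegral.integral_hasDerivAt_right (hhint r hr)
      (ContinuousAt.stronglyMeasurableAtFilter isOpen_Ioi hhca r hr) (hhca r hr)
  have hJhca : ∀ r ∈ Set.Ioi (0:ℝ), ContinuousAt (fun t => J t * h t) r := fun r hr =>
    (hJcont r hr).mul (hhca r hr)
  have hBint : ∀ r > 0, IntervalIntegrable (fun t => J t * h t) volume 0 r := by
    intro r hr
    rw [intervalIntegrable_iff_integrableOn_Ioc_of_le hr.le]
    exact hbig.mono_set Set.Ioc_subset_Ioi_self
  have hBderiv : ∀ r > 0, HasDerivAt B (J r * h r) r := fun r hr =>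
    intervalIntegral.integral_hasDerivAt_right (hBint r hr)
      (ContinuousAt.stronglyMeasurableAtFilter isOpen_Ioi hJhca r hr) (hJhca r hr)
  have hVderiv : ∀ r > 0, HasDerivAt V (-g r * A r) r := by
    intro r hr
    have h2 : HasDerivAt (fun x => J x * A x - B x)
        ((-g r) * A r + J r * h r - J r * h r) r :=
      ((hJderiv r hr).mul (hAderiv r hr)).sub (hBderiv r hr)
    have h3 : HasDerivAt (fun x => J x * A x - B x) (-g r * A r) r := by
      convert h2 using 1; ring
    exact h3.congr_of_eventuallyEq (Filter.Eventually.of_forall hV)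
  have hApos : ∀ r > 0, 0 < A r := fun r hr =>
    intervalIntegral.intervalIntegral_pos_of_pos_on (hhint r hr)
      (fun x hx => hhpos x hx.1) hr
  refine ⟨hVderiv, fun r hr => ?_, ?_⟩
  · have := mul_pos (hgpos r hr) (hApos r hr)
    nlinarith
  -- limit
  · have hJhnonneg : ∀ t ∈ Set.Ioi (0:ℝ), 0 ≤ J t * h t := fun t ht =>
      mul_nonneg (hJnonneg t ht) (hhpos t ht).le
    set L : ℝ := ∫ t in Set.Ioi (0:ℝ), J t * h t with hL
    have hBle : ∀ r > 0, B r ≤ L := by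
      intro r hr
      calc B r = ∫ t in Set.Ioc 0 r, J t * h t := intervalIntegral.integral_of_le hr.le
        _ ≤ L := by
          refine setIntegral_mono_set hbig ?_ (Set.Ioc_subset_Ioi_self).eventuallyLE
          exact (ae_restrict_iff' measurableSet_Ioi).2 (Filter.Eventually.of_forall hJhnonneg)
    have hVlb : ∀ r > 0, -L ≤ V r := by
      intro r hr
      rw [hV r]
      have : 0 ≤ J r * A r := mul_nonneg (hJnonneg r hr) (hApos r hr).le
      have := hBle r hr
      simp only [← hJ, ← hA, ← hB] at *
      linarith
    have hV1 : V 1 ≤ 0 := by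
      have key : J 1 * A 1 ≤ B 1 := by
        have h1 : (∫ t in (0:ℝ)..1, J 1 * h t) ≤ ∫ t in (0:ℝ)..1, J t * h t := by
          refine intervalIntegral.integral_mono_ae_restrict zero_le_one
            ((hhint 1 one_pos).const_mul _) (hBint 1 one_pos) ?_
          have h0 : ∀ᵐ t : ℝ ∂volume, t ≠ 0 := by
            rw [ae_iff]
            simpa using measure_singleton (0:ℝ)
          refine (ae_restrict_iff' measurableSet_Icc).2 ?_
          filter_upwards [h0] with t ht0 ht
          have htpos : 0 < t := lt_of_le_of_ne ht.1 (Ne.symm ht0)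
          have hJle : J 1 ≤ J t := by
            have heq := hJsub t 1 htpos ht.2
            have hnn : 0 ≤ ∫ x in t..1, g x :=
              intervalIntegral.integral_nonneg ht.2
                (fun x hx => (hgpos x (lt_of_lt_of_le htpos hx.1)).le)
            linarith
          exact mul_le_mul_of_nonneg_right hJle (hhpos t htpos).le
        calc J 1 * A 1 = ∫ t in (0:ℝ)..1, J 1 * h t :=
              (intervalIntegral.integral_const_mul _ _).symm
          _ ≤ B 1 := h1
      rw [hV 1]
      simp only [← hJ, ← hA, ← hB] at *
      linarith
    -- antitone
    have hanti : StrictAntiOn V (Set.Ici (1:ℝ)) := by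
      refine strictAntiOn_of_deriv_neg (convex_Ici 1) ?_ ?_
      · intro x hx
        exact ((hVderiv x (lt_of_lt_of_le one_pos hx)).continuousAt).continuousWithinAt
      · intro x hx
        rw [interior_Ici] at hx
        have hx0 : (0:ℝ) < x := lt_trans one_pos hx
        rw [(hVderiv x hx0).deriv]
        have := mul_pos (hgpos x hx0) (hApos x hx0)
        nlinarith
    set W : ℝ → ℝ := fun r => V (max 1 r) with hW
    have hWanti : Antitone W := by
      intro a b hab
      exact hanti.antitoneOn (le_max_left 1 a) (le_max_left 1 b)
        (max_le_max le_rfl hab)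
    have hWbdd : BddBelow (Set.range W) := by
      refine ⟨-L, ?_⟩
      rintro y ⟨r, rfl⟩
      exact hVlb _ (lt_of_lt_of_le one_pos (le_max_left 1 r))
    have hWtend : Tendsto W atTop (nhds (⨅ r, W r)) := tendsto_atTop_ciInf hWanti hWbdd
    refine ⟨⨅ r, W r, ?_, ?_⟩
    · refine le_trans (ciInf_le hWbdd 1) ?_
      simpa [hW] using hV1
    · refine hWtend.congr' ?_
      filter_upwards [eventually_ge_atTop (1:ℝ)] with r hr
      rw [hW]; simp [max_eq_right hr]

/-- The Mastrolia–Monticelli–Punzo type barrier `V` is differentiable with the stated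
negative derivative, and tends to a finite nonpositive limit `D` at infinity. -/
theorem stmt_9 (n : ℕ) (hn : 2 ≤ n) (a₀ ρp fa : ℝ → ℝ)
    (ha₀c : ContinuousOn a₀ (Set.Ioi 0)) (hρpc : ContinuousOn ρp (Set.Ioi 0))
    (hfac : ContinuousOn fa (Set.Ioi 0))
    (ha₀pos : ∀ r > 0, 0 < a₀ r) (hρppos : ∀ r > 0, 0 < ρp r) (hfapos : ∀ r > 0, 0 < fa r)
    (hJint : ∀ t > 0,
      IntegrableOn (fun s => (ρp s ^ 2 * fa s ^ (n - 1))⁻¹) (Set.Ioi t) volume)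
    (hint0 : ∀ r > 0, IntervalIntegrable (fun t => a₀ t * fa t ^ (n - 1)) volume 0 r)
    (hbig : IntegrableOn
      (fun t => (∫ s in Set.Ioi t, (ρp s ^ 2 * fa s ^ (n - 1))⁻¹) * (a₀ t * fa t ^ (n - 1)))
      (Set.Ioi 0) volume)
    (V : ℝ → ℝ)
    (hV : ∀ r, V r =
        (∫ s in Set.Ioi r, (ρp s ^ 2 * fa s ^ (n - 1))⁻¹)
            * (∫ t in (0:ℝ)..r, a₀ t * fa t ^ (n - 1))
          - ∫ t in (0:ℝ)..r,
              (∫ s in Set.Ioi t, (ρp s ^ 2 * fa s ^ (n - 1))⁻¹) * (a₀ t * fa t ^ (n - 1))) :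
    (∀ r > 0, HasDerivAt V
        (-(ρp r ^ 2 * fa r ^ (n - 1))⁻¹ * ∫ t in (0:ℝ)..r, a₀ t * fa t ^ (n - 1)) r) ∧
    (∀ r > 0,
      -(ρp r ^ 2 * fa r ^ (n - 1))⁻¹ * (∫ t in (0:ℝ)..r, a₀ t * fa t ^ (n - 1)) < 0) ∧
    (∃ D : ℝ, D ≤ 0 ∧ Filter.Tendsto V Filter.atTop (nhds D)) := by
  have hgpos : ∀ s > 0, 0 < (ρp s ^ 2 * fa s ^ (n - 1))⁻¹ := fun s hs =>
    inv_pos.2 (mul_pos (pow_pos (hρppos s hs) 2) (pow_pos (hfapos s hs) (n - 1)))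
  have hgc : ContinuousOn (fun s => (ρp s ^ 2 * fa s ^ (n - 1))⁻¹) (Set.Ioi 0) := by
    refine ContinuousOn.inv₀ ((hρpc.pow 2).mul (hfac.pow (n - 1))) ?_
    intro x hx
    exact ne_of_gt (mul_pos (pow_pos (hρppos x hx) 2) (pow_pos (hfapos x hx) (n - 1)))
  have hhc : ContinuousOn (fun t => a₀ t * fa t ^ (n - 1)) (Set.Ioi 0) :=
    ha₀c.mul (hfac.pow (n - 1))
  have hhpos : ∀ t > 0, 0 < a₀ t * fa t ^ (n - 1) := fun t ht =>
    mul_pos (ha₀pos t ht) (pow_pos (hfapos t ht) (n - 1))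
  exact aux_barrier _ _ hgc hhc hgpos hhpos hJint hint0 hbig V hV
end
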